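/- Let Γ be a connected locally finite countable graph. Then the wired uniform spanning forest measure WSF = P^★ and the free uniform spanning forest measure FSF = P^{◇^⊥} coincide if and only if ∇HD = 0, i.e. ℓ²_-(Γ) = ★ ⊕ ◇. -/

import Mathlib

open MeasureTheory
open scoped InnerProductSpace

variable {V : Type*}

/-- The unit flow `χ^d = 1_d - 1_{ď}` along a dart `d`, as an element of `ℓ²` of the darts. -/
noncomputable def chi (Γ : SimpleGraph V) (d : Γ.Dart) : lp (fun _ : Γ.Dart => ℝ) 2 :=
  letI := Classical.decEq Γ.Dart
  lp.single 2 d 1 - lp.single 2 d.symm 1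

/-- The star of a vertex `v`: the sum of `χ^d` over darts `d` with initial vertex `v`. -/
noncomputable def graphStar (Γ : SimpleGraph V) (v : V) : lp (fun _ : Γ.Dart => ℝ) 2 :=
  ∑ᶠ d ∈ {d : Γ.Dart | d.fst = v}, chi Γ d

/-- The set of cycles: sums `Σ_{i=1}^k χ^{e_i}` over closed sequences of concatenating darts. -/
def cycleSet (Γ : SimpleGraph V) : Set (lp (fun _ : Γ.Dart => ℝ) 2) :=
  {c | ∃ (k : ℕ) (_ : 0 < k) (e : Fin k → Γ.Dart),
    (∀ i : Fin k, (e i).snd = (e (⟨(i + 1) % k, Nat.mod_lt _ ‹0 < k›⟩ : Fin k)).fst) ∧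
    c = ∑ i : Fin k, chi Γ (e i)}

/-- The space `ℓ²₋(Γ)` of antisymmetric square-summable functions on darts, realized as the
orthogonal complement of the span of the symmetrized indicators `1_d + 1_{ď}`. -/
noncomputable def l2minus (Γ : SimpleGraph V) : Submodule ℝ (lp (fun _ : Γ.Dart => ℝ) 2) :=
  letI := Classical.decEq Γ.Dart
  (Submodule.span ℝ (Set.range fun d : Γ.Dart =>
    lp.single 2 d (1 : ℝ) + lp.single 2 d.symm 1))ᗮ

/-- The orthogonal projection onto a closed submodule, as a continuous endomorphism. -/
noncomputable def projCLM {H : Type*} [NormedAddCommGroup H] [InnerProductSpace ℝ H]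
    [CompleteSpace H] (K : Submodule ℝ H) (hK : IsClosed (K : Set H)) : H →L[ℝ] H :=
  haveI : CompleteSpace K := hK.completeSpace_coe
  K.subtypeL.comp K.orthogonalProjectionOnto

lemma isClosed_inf {H : Type*} [NormedAddCommGroup H] [InnerProductSpace ℝ H]
    {A B : Submodule ℝ H} (hA : IsClosed (A : Set H)) (hB : IsClosed (B : Set H)) :
    IsClosed ((A ⊓ B : Submodule ℝ H) : Set H) := by
  rw [Submodule.coe_inf]; exact hA.inter hB

/-!
Stars are orthogonal to cycles, so `★ ⊆ ◇ᗮ ∩ ℓ²₋`, and a short orthogonality computation shows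
`ℓ²₋ = closure (★ + ◇)` exactly when `★ = ◇ᗮ ∩ ℓ²₋`. If the two subspaces agree, so do the two
determinantal measures on every cylinder event `{B ⊆ 𝔅}`; these events form a π-system generating
the product σ-algebra. Conversely, equal measures have equal one-edge marginals
`⟪P_★ χ^e, χ^e⟫ = ⟪P_{◇ᗮ} χ^e, χ^e⟫`; as `★ ⊆ ◇ᗮ`, this forces `P_★ χ^e = P_{◇ᗮ} χ^e`, so every
vector of `◇ᗮ ∩ ℓ²₋` orthogonal to `★` is orthogonal to all `χ^e`, hence zero.
-/

open Submodule

namespace Submodule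
variable {𝕜 E : Type*} [RCLike 𝕜] [NormedAddCommGroup E] [InnerProductSpace 𝕜 E]

theorem eq_of_le_of_orthogonal_inf_eq_bot {U W : Submodule 𝕜 E} [U.HasOrthogonalProjection]
    (h : U ≤ W) (h' : Uᗮ ⊓ W = ⊥) : U = W := by
  rw [← sup_orthogonal_inf_of_hasOrthogonalProjection h, h', sup_bot_eq]

theorem starProjection_apply_eq_of_le_of_inner_eq {U W : Submodule 𝕜 E}
    [U.HasOrthogonalProjection] [W.HasOrthogonalProjection] (h : U ≤ W) {x : E}
    (hx : ⟪U.starProjection x, x⟫_𝕜 = ⟪W.starProjection x, x⟫_𝕜) :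
    U.starProjection x = W.starProjection x := by
  set u := W.starProjection x - U.starProjection x with hu
  have huW : u ∈ W := W.sub_mem (W.starProjection_apply_mem x) (h (U.starProjection_apply_mem x))
  have huU : u ∈ Uᗮ := by
    have := Uᗮ.sub_mem (U.sub_starProjection_mem_orthogonal x)
      (orthogonal_le h (W.sub_starProjection_mem_orthogonal x))
    rwa [sub_sub_sub_cancel_left] at this
  have : ⟪u, u⟫_𝕜 = 0 := calc
    ⟪u, u⟫_𝕜 = ⟪u, W.starProjection x⟫_𝕜 - ⟪u, U.starProjection x⟫_𝕜 := inner_sub_right _ _ _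
    _ = ⟪u, x⟫_𝕜 := by
      rw [← inner_starProjection_left_eq_right, starProjection_eq_self_iff.2 huW,
        inner_left_of_mem_orthogonal (U.starProjection_apply_mem x) huU, sub_zero]
    _ = 0 := by rw [hu, inner_sub_left, hx, sub_self]
  exact (sub_eq_zero.1 (inner_self_eq_zero.1 this)).symm

theorem eq_of_le_of_starProjection_eq {ι : Type*} {U W : Submodule 𝕜 E}
    [U.HasOrthogonalProjection] [W.HasOrthogonalProjection] (h : U ≤ W) {v : ι → E}
    (hv : ∀ w ∈ W, (∀ i, ⟪v i, w⟫_𝕜 = 0) → w = 0)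
    (hP : ∀ i, U.starProjection (v i) = W.starProjection (v i)) : U = W := by
  refine eq_of_le_of_orthogonal_inf_eq_bot h (eq_bot_iff.2 fun w ⟨hwU, hwW⟩ => ?_)
  refine (mem_bot 𝕜).2 (hv w hwW fun i => ?_)
  rw [← starProjection_eq_self_iff.2 hwW, ← inner_starProjection_left_eq_right, ← hP i]
  exact inner_right_of_mem_orthogonal (U.starProjection_apply_mem _) hwU

theorem topologicalClosure_le_orthogonal_closure_inf {A B M : Submodule 𝕜 E}
    (hM : IsClosed (M : Set E)) (hA : A ≤ M) (hAB : A ⟂ B) :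
    A.topologicalClosure ≤ B.topologicalClosureᗮ ⊓ M :=
  le_inf (topologicalClosure_minimal _ (by rwa [orthogonal_closure, ← isOrtho_iff_le])
    (isClosed_orthogonal _)) (topologicalClosure_minimal _ hA hM)

theorem orthogonal_closure_inf_eq_closure_iff [CompleteSpace E] {A B M : Submodule 𝕜 E}
    (hM : IsClosed (M : Set E)) (hA : A ≤ M) (hB : B ≤ M) (hAB : A ⟂ B) :
    B.topologicalClosureᗮ ⊓ M = A.topologicalClosure ↔ (A ⊔ B).topologicalClosure = M := by
  constructor
  · intro h
    refine le_antisymm (topologicalClosure_minimal _ (sup_le hA hB) hM) ?_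
    rw [← sup_orthogonal_inf_of_hasOrthogonalProjection (topologicalClosure_minimal _ hB hM), h]
    exact sup_le (topologicalClosure_mono le_sup_right) (topologicalClosure_mono le_sup_left)
  · intro h
    refine (eq_of_le_of_orthogonal_inf_eq_bot
      (topologicalClosure_le_orthogonal_closure_inf hM hA hAB) ?_).symm
    rw [orthogonal_closure, orthogonal_closure, ← inf_assoc, inf_orthogonal, ← orthogonal_closure,
      h, inf_comm, inf_orthogonal_eq_bot]

end Submodule

theorem projCLM_congr {H : Type*} [NormedAddCommGroup H] [InnerProductSpace ℝ H]
    [CompleteSpace H] {K L : Submodule ℝ H} (h : K = L) (hK : IsClosed (K : Set H))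
    (hL : IsClosed (L : Set H)) : projCLM K hK = projCLM L hL := by
  subst h; rfl

section Graph
variable (Γ : SimpleGraph V)

open scoped Classical in
theorem chi_apply (d e : Γ.Dart) :
    chi Γ d e = (if e = d then 1 else 0) - (if e = d.symm then 1 else 0) := by
  simp only [chi, lp.coeFn_sub, Pi.sub_apply, lp.single_apply, Pi.single_apply]
  congr

theorem inner_chi_left (d : Γ.Dart) (f : lp (fun _ : Γ.Dart => ℝ) 2) :
    ⟪chi Γ d, f⟫_ℝ = f d - f d.symm := by
  classical
  simp [chi, inner_sub_left, lp.inner_single_left]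

theorem mem_l2minus_iff (f : lp (fun _ : Γ.Dart => ℝ) 2) :
    f ∈ l2minus Γ ↔ ∀ d : Γ.Dart, f d.symm = -f d := by
  classical
  rw [l2minus, ← span_singleton_le_iff_mem, ← isOrtho_iff_le, isOrtho_comm, isOrtho_span]
  simp [inner_add_left, lp.inner_single_left, add_eq_zero_iff_eq_neg']

theorem l2minus_isClosed : IsClosed (l2minus Γ : Set (lp (fun _ : Γ.Dart => ℝ) 2)) :=
  isClosed_orthogonal _

theorem chi_mem_l2minus (d : Γ.Dart) : chi Γ d ∈ l2minus Γ := by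
  classical
  rw [mem_l2minus_iff]
  intro e
  have h₁ : e.symm = d ↔ e = d.symm := SimpleGraph.Dart.symm_involutive.eq_iff
  have h₂ : e.symm = d.symm ↔ e = d := SimpleGraph.Dart.symm_involutive.injective.eq_iff
  simp only [chi_apply, h₁, h₂]
  ring

theorem eq_zero_of_mem_l2minus_of_inner_chi {w : lp (fun _ : Γ.Dart => ℝ) 2} (hw : w ∈ l2minus Γ)
    (h : ∀ d, ⟪chi Γ d, w⟫_ℝ = 0) : w = 0 := by
  ext d
  have := h d
  rw [inner_chi_left, (mem_l2minus_iff Γ w).1 hw] at this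
  simp only [lp.coeFn_zero, Pi.zero_apply]
  linarith

theorem finite_setOf_dart_fst_eq (hlf : ∀ v : V, (Γ.neighborSet v).Finite) (v : V) :
    {d : Γ.Dart | d.fst = v}.Finite :=
  have := (hlf v).to_subtype
  (Set.finite_range (Γ.dartOfNeighborSet v)).subset fun d (hd : d.fst = v) =>
    ⟨⟨d.snd, hd ▸ d.adj⟩, by ext <;> simp [SimpleGraph.dartOfNeighborSet, hd]⟩

open scoped Classical in
theorem graphStar_apply (hlf : ∀ v : V, (Γ.neighborSet v).Finite) (v : V) (e : Γ.Dart) :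
    graphStar Γ v e = (if e.fst = v then 1 else 0) - (if e.snd = v then 1 else 0) := by
  rw [graphStar, finsum_mem_eq_finite_toFinset_sum _ (finite_setOf_dart_fst_eq Γ hlf v),
    lp.coeFn_sum, Finset.sum_apply]
  have h : ∀ d : Γ.Dart, e = d.symm ↔ e.symm = d := fun d =>
    SimpleGraph.Dart.symm_involutive.eq_iff.symm
  simp [chi_apply, Finset.sum_sub_distrib, h]

variable {Γ} in
theorem sum_dart_snd_eq_sum_dart_fst {M : Type*} [AddCommMonoid M] {k : ℕ} (hk : 0 < k)
    (e : Fin k → Γ.Dart) (he : ∀ i : Fin k, (e i).snd = (e ⟨(i + 1) % k, Nat.mod_lt _ hk⟩).fst)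
    (φ : V → M) : ∑ i, φ (e i).snd = ∑ i, φ (e i).fst := by
  have : NeZero k := ⟨hk.ne'⟩
  have hsucc : ∀ i : Fin k, (⟨(i + 1) % k, Nat.mod_lt _ hk⟩ : Fin k) = i + 1 := fun i => by
    ext; simp [Fin.val_add, Nat.add_mod]
  simp only [he, hsucc]
  exact Equiv.sum_comp (Equiv.addRight 1) fun i => φ (e i).fst

theorem graphStar_mem_l2minus (hlf : ∀ v : V, (Γ.neighborSet v).Finite) (v : V) :
    graphStar Γ v ∈ l2minus Γ := by
  classical
  simp [mem_l2minus_iff, graphStar_apply Γ hlf, SimpleGraph.Dart.symm_toProd]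

theorem cycleSet_subset_l2minus : cycleSet Γ ⊆ l2minus Γ := by
  rintro _ ⟨k, hk, e, -, rfl⟩
  exact sum_mem fun i _ => chi_mem_l2minus Γ (e i)

open scoped Classical in
theorem inner_graphStar_chi (hlf : ∀ v : V, (Γ.neighborSet v).Finite) (v : V) (d : Γ.Dart) :
    ⟪graphStar Γ v, chi Γ d⟫_ℝ =
      2 * ((if d.fst = v then 1 else 0) - (if d.snd = v then 1 else 0)) := by
  rw [real_inner_comm, inner_chi_left, graphStar_apply Γ hlf, graphStar_apply Γ hlf]
  simp only [SimpleGraph.Dart.symm_toProd, Prod.fst_swap, Prod.snd_swap]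
  ring

theorem inner_graphStar_eq_zero_of_mem_cycleSet (hlf : ∀ v : V, (Γ.neighborSet v).Finite) (v : V)
    {c : lp (fun _ : Γ.Dart => ℝ) 2} (hc : c ∈ cycleSet Γ) : ⟪graphStar Γ v, c⟫_ℝ = 0 := by
  classical
  obtain ⟨k, hk, e, he, rfl⟩ := hc
  simp only [inner_sum, inner_graphStar_chi Γ hlf, ← Finset.mul_sum, Finset.sum_sub_distrib]
  rw [sum_dart_snd_eq_sum_dart_fst hk e he fun u => if u = v then (1 : ℝ) else 0, sub_self,
    mul_zero]

theorem span_graphStar_le_l2minus (hlf : ∀ v : V, (Γ.neighborSet v).Finite) :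
    span ℝ (Set.range (graphStar Γ)) ≤ l2minus Γ :=
  span_le.2 <| Set.range_subset_iff.2 (graphStar_mem_l2minus Γ hlf)

theorem span_cycleSet_le_l2minus : span ℝ (cycleSet Γ) ≤ l2minus Γ :=
  span_le.2 (cycleSet_subset_l2minus Γ)

theorem span_graphStar_isOrtho_span_cycleSet (hlf : ∀ v : V, (Γ.neighborSet v).Finite) :
    span ℝ (Set.range (graphStar Γ)) ⟂ span ℝ (cycleSet Γ) :=
  isOrtho_span.2 <| by
    rintro _ ⟨v, rfl⟩ c hc
    exact inner_graphStar_eq_zero_of_mem_cycleSet Γ hlf v hc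

theorem eq_of_le_of_inner_projCLM_chi_eq {S T : Submodule ℝ (lp (fun _ : Γ.Dart => ℝ) 2)}
    (hS : IsClosed (S : Set (lp (fun _ : Γ.Dart => ℝ) 2)))
    (hT : IsClosed (T : Set (lp (fun _ : Γ.Dart => ℝ) 2))) (hST : S ≤ T) (hTM : T ≤ l2minus Γ)
    (h : ∀ d, ⟪projCLM S hS (chi Γ d), chi Γ d⟫_ℝ = ⟪projCLM T hT (chi Γ d), chi Γ d⟫_ℝ) :
    S = T := by
  have := hS.completeSpace_coe
  have := hT.completeSpace_coe
  exact eq_of_le_of_starProjection_eq hST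
    (fun w hw => eq_zero_of_mem_l2minus_of_inner_chi Γ (hTM hw))
    fun d => starProjection_apply_eq_of_le_of_inner_eq hST (h d)

end Graph

namespace MeasureTheory.ProbabilityMeasure

theorem ext_of_forall_setOf_forall_mem_eq_true {ι : Type*} {μ ν : ProbabilityMeasure (ι → Bool)}
    (h : ∀ s : Finset ι, μ {z | ∀ i ∈ s, z i = true} = ν {z | ∀ i ∈ s, z i = true}) :
    μ = ν := by
  classical
  let C : Set (Set (ι → Bool)) := Set.range fun s : Finset ι => {z | ∀ i ∈ s, z i = true}
  have hC : IsPiSystem C := by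
    rintro _ ⟨s, rfl⟩ _ ⟨t, rfl⟩ -
    exact ⟨s ∪ t, Set.ext fun z => by simp [or_imp, forall_and]⟩
  have hgen : MeasurableSpace.pi = MeasurableSpace.generateFrom C := by
    refine le_antisymm (iSup_le fun i => Measurable.comap_le ?_)
      (MeasurableSpace.generateFrom_le ?_)
    · refine @measurable_to_bool _ (MeasurableSpace.generateFrom C) _
        (MeasurableSpace.measurableSet_generateFrom ⟨{i}, ?_⟩)
      ext z
      simp
    · rintro _ ⟨s, rfl⟩
      simp only [Set.ofPred_forall]
      exact Finset.measurableSet_biInter s fun i _ =>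
        measurable_pi_apply i (measurableSet_singleton _)
  refine toMeasure_injective (ext_of_generate_finite C hgen hC ?_ (by simp))
  rintro _ ⟨s, rfl⟩
  simpa [← ennreal_coeFn_eq_coeFn_toMeasure] using h s

end MeasureTheory.ProbabilityMeasure

section GraphMeasure
variable (Γ : SimpleGraph V)

theorem exists_dart_edge_eq (e : Γ.edgeSet) : ∃ d : Γ.Dart, d.edge = e := by
  obtain ⟨e, he⟩ := e
  induction e using Sym2.ind with
  | _ a b => exact ⟨⟨(a, b), he⟩, rfl⟩

theorem probabilityMeasure_ext_of_dart_finsets {μ ν : ProbabilityMeasure (Γ.edgeSet → Bool)}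
    (h : ∀ B : Finset Γ.Dart, (∀ d ∈ B, d.symm ∉ B) →
      μ {z | ∀ d ∈ B, z ⟨d.edge, d.edge_mem⟩ = true} =
        ν {z | ∀ d ∈ B, z ⟨d.edge, d.edge_mem⟩ = true}) :
    μ = ν := by
  classical
  choose φ hφ using exists_dart_edge_eq Γ
  refine ProbabilityMeasure.ext_of_forall_setOf_forall_mem_eq_true fun s => ?_
  have hB : ∀ d ∈ s.image φ, d.symm ∉ s.image φ := by
    simp only [Finset.mem_image]
    rintro _ ⟨e, -, rfl⟩ ⟨e', -, he'⟩
    have : e' = e := Subtype.ext (by rw [← hφ, ← hφ, he', SimpleGraph.Dart.edge_symm])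
    exact (φ e).symm_ne (this ▸ he').symm
  have hφ' : ∀ e, (⟨(φ e).edge, (φ e).edge_mem⟩ : Γ.edgeSet) = e := fun e => Subtype.ext (hφ e)
  have hset : {z : Γ.edgeSet → Bool | ∀ d ∈ s.image φ, z ⟨d.edge, d.edge_mem⟩ = true} =
      {z | ∀ e ∈ s, z e = true} := by
    simp only [← Finset.mem_coe, Finset.coe_image, Set.forall_mem_image, hφ']
  rw [← hset]
  exact h _ hB

end GraphMeasure

theorem wsf_eq_fsf_iff_no_harmonic_dirichlet_general [DecidableEq V]
    (Γ : SimpleGraph V) (hlf : ∀ v : V, (Γ.neighborSet v).Finite)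
    (μW μF : ProbabilityMeasure (Γ.edgeSet → Bool))
    (hW : ∀ B : Finset Γ.Dart, (∀ d ∈ B, d.symm ∉ B) →
      (μW {z : Γ.edgeSet → Bool | ∀ d ∈ B, z ⟨d.edge, d.edge_mem⟩ = true} : ℝ) =
      (Matrix.of fun d d' : B =>
        ⟪projCLM ((Submodule.span ℝ (Set.range (graphStar Γ))).topologicalClosure)
            (Submodule.isClosed_topologicalClosure _) (chi Γ d), chi Γ d'⟫_ℝ / 2).det)
    (hF : ∀ B : Finset Γ.Dart, (∀ d ∈ B, d.symm ∉ B) →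
      (μF {z : Γ.edgeSet → Bool | ∀ d ∈ B, z ⟨d.edge, d.edge_mem⟩ = true} : ℝ) =
      (Matrix.of fun d d' : B =>
        ⟪projCLM (((Submodule.span ℝ (cycleSet Γ)).topologicalClosure)ᗮ ⊓ l2minus Γ)
            (isClosed_inf (Submodule.isClosed_orthogonal _) (Submodule.isClosed_orthogonal _))
            (chi Γ d), chi Γ d'⟫_ℝ / 2).det) :
    μW = μF ↔
      ((Submodule.span ℝ (Set.range (graphStar Γ))) ⊔
        (Submodule.span ℝ (cycleSet Γ))).topologicalClosure = l2minus Γ := by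
  have hM := l2minus_isClosed Γ
  have hA := span_graphStar_le_l2minus Γ hlf
  have hAB := span_graphStar_isOrtho_span_cycleSet Γ hlf
  rw [← orthogonal_closure_inf_eq_closure_iff hM hA (span_cycleSet_le_l2minus Γ) hAB]
  constructor
  · intro hμ
    refine (eq_of_le_of_inner_projCLM_chi_eq Γ (isClosed_topologicalClosure _)
      (isClosed_inf (isClosed_orthogonal _) hM)
      (topologicalClosure_le_orthogonal_closure_inf hM hA hAB) inf_le_right fun d => ?_).symm
    have hd : ∀ e ∈ ({d} : Finset Γ.Dart), e.symm ∉ ({d} : Finset Γ.Dart) := by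
      simp [SimpleGraph.Dart.symm_ne]
    have h := hW {d} hd
    rw [hμ, hF {d} hd, Matrix.det_unique, Matrix.det_unique] at h
    simpa using h.symm
  · intro h
    refine probabilityMeasure_ext_of_dart_finsets Γ fun B hB => NNReal.coe_injective ?_
    rw [hW B hB, hF B hB, projCLM_congr h]

/-- For a connected locally finite countable graph, the wired spanning forest measure
`WSF = P^★` and the free spanning forest measure `FSF = P^{◇ᗮ}` (both characterized by their
determinantal cylinder probabilities) coincide iff `∇HD = 0`, i.e. `ℓ²₋(Γ) = ★ ⊕ ◇`. -/
theorem wsf_eq_fsf_iff_no_harmonic_dirichlet [Countable V] [DecidableEq V]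
    (Γ : SimpleGraph V) (hconn : Γ.Connected) (hlf : ∀ v : V, (Γ.neighborSet v).Finite)
    (μW μF : ProbabilityMeasure (Γ.edgeSet → Bool))
    (hW : ∀ B : Finset Γ.Dart, (∀ d ∈ B, d.symm ∉ B) →
      (μW {z : Γ.edgeSet → Bool | ∀ d ∈ B, z ⟨d.edge, d.edge_mem⟩ = true} : ℝ) =
      (Matrix.of fun d d' : B =>
        ⟪projCLM ((Submodule.span ℝ (Set.range (graphStar Γ))).topologicalClosure)
            (Submodule.isClosed_topologicalClosure _) (chi Γ d), chi Γ d'⟫_ℝ / 2).det)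
    (hF : ∀ B : Finset Γ.Dart, (∀ d ∈ B, d.symm ∉ B) →
      (μF {z : Γ.edgeSet → Bool | ∀ d ∈ B, z ⟨d.edge, d.edge_mem⟩ = true} : ℝ) =
      (Matrix.of fun d d' : B =>
        ⟪projCLM (((Submodule.span ℝ (cycleSet Γ)).topologicalClosure)ᗮ ⊓ l2minus Γ)
            (isClosed_inf (Submodule.isClosed_orthogonal _) (Submodule.isClosed_orthogonal _))
            (chi Γ d), chi Γ d'⟫_ℝ / 2).det) :
    μW = μF ↔
      ((Submodule.span ℝ (Set.range (graphStar Γ))) ⊔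
        (Submodule.span ℝ (cycleSet Γ))).topologicalClosure = l2minus Γ :=
  wsf_eq_fsf_iff_no_harmonic_dirichlet_general Γ hlf μW μF hW hF
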